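/- Let J > 0 and define the supercoherent Hamiltonian on (ℂ²)^{⊗4}: H_SC = J Σ_{1≤m<n≤4} (X_m X_n + Y_m Y_n + Z_m Z_n). Let |0̄⟩ = |ψ⁻⟩₁₂ ⊗ |ψ⁻⟩₃₄ and |1̄⟩ = (1/√3)(|T₊⟩₁₂⊗|T₋⟩₃₄ − |T₀⟩₁₂⊗|T₀⟩₃₄ + |T₋⟩₁₂⊗|T₊⟩₃₄). Then: (i) H_SC|0̄⟩ = −6J|0̄⟩ and H_SC|1̄⟩ = −6J|1̄⟩; (ii) every eigenvalue of H_SC belongs to {−6J, −2J, 6J}, so −6J is the minimal eigenvalue and there is an energy gap of 4J above the ground space; (iii) the eigenspace of H_SC with eigenvalue −6J is exactly the two-dimensional span of |0̄⟩ and |1̄⟩. -/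
import Mathlib


open Complex

open Complex

/-- A (not necessarily normalised) state of `N` qubits, as a function on the
computational basis `Fin N → Fin 2`. -/
abbrev QState (N : ℕ) := (Fin N → Fin 2) → ℂ

/-- The Hermitian inner product on `N`-qubit states. -/
noncomputable def qInner {N : ℕ} (ψ φ : QState N) : ℂ :=
  ∑ s : Fin N → Fin 2, (starRingEnd ℂ) (ψ s) * φ s

/-- Pauli `X` acting on the `n`-th qubit. -/
noncomputable def pauliX {N : ℕ} (n : Fin N) (ψ : QState N) : QState N :=
  fun s => ψ (Function.update s n (s n + 1))

/-- Pauli `Y` acting on the `n`-th qubit. -/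
noncomputable def pauliY {N : ℕ} (n : Fin N) (ψ : QState N) : QState N :=
  fun s => (if s n = 0 then -Complex.I else Complex.I) * ψ (Function.update s n (s n + 1))

/-- Pauli `Z` acting on the `n`-th qubit. -/
noncomputable def pauliZ {N : ℕ} (n : Fin N) (ψ : QState N) : QState N :=
  fun s => (if s n = 0 then 1 else -1) * ψ s

/-- The collective spin operator `S_x = (1/2) Σ_n X_n`. -/
noncomputable def Sx {N : ℕ} (ψ : QState N) : QState N :=
  (1 / 2 : ℂ) • ∑ n : Fin N, pauliX n ψ

/-- The collective spin operator `S_y = (1/2) Σ_n Y_n`. -/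
noncomputable def Sy {N : ℕ} (ψ : QState N) : QState N :=
  (1 / 2 : ℂ) • ∑ n : Fin N, pauliY n ψ

/-- The collective spin operator `S_z = (1/2) Σ_n Z_n`. -/
noncomputable def Sz {N : ℕ} (ψ : QState N) : QState N :=
  (1 / 2 : ℂ) • ∑ n : Fin N, pauliZ n ψ

/-- The two-qubit singlet state `|ψ⁻⟩ = (|01⟩ − |10⟩)/√2`. -/
noncomputable def singlet : Fin 2 → Fin 2 → ℂ := fun a b =>
  (if (a, b) = (0, 1) then 1 else if (a, b) = (1, 0) then -1 else 0) / (Real.sqrt 2 : ℂ)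

/-- The two-qubit triplet state `|T₊⟩ = |00⟩`. -/
noncomputable def Tplus : Fin 2 → Fin 2 → ℂ := fun a b => if (a, b) = (0, 0) then 1 else 0

/-- The two-qubit triplet state `|T₀⟩ = (|01⟩ + |10⟩)/√2`. -/
noncomputable def T0 : Fin 2 → Fin 2 → ℂ := fun a b =>
  (if (a, b) = (0, 1) then 1 else if (a, b) = (1, 0) then 1 else 0) / (Real.sqrt 2 : ℂ)

/-- The two-qubit triplet state `|T₋⟩ = |11⟩`. -/
noncomputable def Tminus : Fin 2 → Fin 2 → ℂ := fun a b => if (a, b) = (1, 1) then 1 else 0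

/-- The logical zero state `|0̄⟩ = |ψ⁻⟩₁₂ ⊗ |ψ⁻⟩₃₄` of the 4-qubit DF subspace. -/
noncomputable def zeroBar : QState 4 := fun s => singlet (s 0) (s 1) * singlet (s 2) (s 3)

/-- The logical one state
`|1̄⟩ = (1/√3)(|T₊⟩₁₂⊗|T₋⟩₃₄ − |T₀⟩₁₂⊗|T₀⟩₃₄ + |T₋⟩₁₂⊗|T₊⟩₃₄)` of the 4-qubit DF subspace. -/
noncomputable def oneBar : QState 4 := fun s =>
  (1 / (Real.sqrt 3 : ℂ)) *
    (Tplus (s 0) (s 1) * Tminus (s 2) (s 3) - T0 (s 0) (s 1) * T0 (s 2) (s 3) +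
      Tminus (s 0) (s 1) * Tplus (s 2) (s 3))


/-- The Heisenberg exchange interaction `E_{mn} = X_mX_n + Y_mY_n + Z_mZ_n`. -/
noncomputable def exch {N : ℕ} (m n : Fin N) (ψ : QState N) : QState N :=
  pauliX m (pauliX n ψ) + pauliY m (pauliY n ψ) + pauliZ m (pauliZ n ψ)

/-- The supercoherent Hamiltonian `H_SC = J Σ_{m<n} E_{mn}` on four qubits. -/
noncomputable def HSC (J : ℝ) (ψ : QState 4) : QState 4 :=
  (J : ℂ) • ∑ p ∈ Finset.univ.filter (fun p : Fin 4 × Fin 4 => p.1 < p.2),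
    exch p.1 p.2 ψ


lemma vec_eta (s : Fin 4 → Fin 2) : ![s 0, s 1, s 2, s 3] = s := by
  funext i; fin_cases i <;> rfl

lemma upd0 (a b c d x : Fin 2) : Function.update ![a,b,c,d] (0 : Fin 4) x = ![x,b,c,d] := by
  funext i; fin_cases i <;> simp [Function.update_apply]
lemma upd1 (a b c d x : Fin 2) : Function.update ![a,b,c,d] (1 : Fin 4) x = ![a,x,c,d] := by
  funext i; fin_cases i <;> simp [Function.update_apply]
lemma upd2 (a b c d x : Fin 2) : Function.update ![a,b,c,d] (2 : Fin 4) x = ![a,b,x,d] := by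
  funext i; fin_cases i <;> simp [Function.update_apply]
lemma upd3 (a b c d x : Fin 2) : Function.update ![a,b,c,d] (3 : Fin 4) x = ![a,b,c,x] := by
  funext i; fin_cases i <;> simp [Function.update_apply]

/-- Sum of the six transposition (SWAP) operators. -/
noncomputable def Pop (ψ : QState 4) : QState 4 := fun s =>
  ψ ![s 1, s 0, s 2, s 3] + ψ ![s 2, s 1, s 0, s 3] + ψ ![s 3, s 1, s 2, s 0] +
  ψ ![s 0, s 2, s 1, s 3] + ψ ![s 0, s 3, s 2, s 1] + ψ ![s 0, s 1, s 3, s 2]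


lemma exch01 (ψ : QState 4) (a b c d : Fin 2) :
    exch 0 1 ψ ![a,b,c,d] = 2 * ψ ![b,a,c,d] - ψ ![a,b,c,d] := by
  fin_cases a <;> fin_cases b <;>
    simp [exch, pauliX, pauliY, pauliZ, upd0, upd1, upd2, upd3] <;>
    ring_nf <;> simp [Complex.I_sq] <;> ring_nf

lemma exch02 (ψ : QState 4) (a b c d : Fin 2) :
    exch 0 2 ψ ![a,b,c,d] = 2 * ψ ![c,b,a,d] - ψ ![a,b,c,d] := by
  fin_cases a <;> fin_cases c <;>
    simp [exch, pauliX, pauliY, pauliZ, upd0, upd1, upd2, upd3] <;>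
    ring_nf <;> simp [Complex.I_sq] <;> ring_nf

lemma exch03 (ψ : QState 4) (a b c d : Fin 2) :
    exch 0 3 ψ ![a,b,c,d] = 2 * ψ ![d,b,c,a] - ψ ![a,b,c,d] := by
  fin_cases a <;> fin_cases d <;>
    simp [exch, pauliX, pauliY, pauliZ, upd0, upd1, upd2, upd3] <;>
    ring_nf <;> simp [Complex.I_sq] <;> ring_nf

lemma exch12 (ψ : QState 4) (a b c d : Fin 2) :
    exch 1 2 ψ ![a,b,c,d] = 2 * ψ ![a,c,b,d] - ψ ![a,b,c,d] := by
  fin_cases b <;> fin_cases c <;>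
    simp [exch, pauliX, pauliY, pauliZ, upd0, upd1, upd2, upd3] <;>
    ring_nf <;> simp [Complex.I_sq] <;> ring_nf

lemma exch13 (ψ : QState 4) (a b c d : Fin 2) :
    exch 1 3 ψ ![a,b,c,d] = 2 * ψ ![a,d,c,b] - ψ ![a,b,c,d] := by
  fin_cases b <;> fin_cases d <;>
    simp [exch, pauliX, pauliY, pauliZ, upd0, upd1, upd2, upd3] <;>
    ring_nf <;> simp [Complex.I_sq] <;> ring_nf

lemma exch23 (ψ : QState 4) (a b c d : Fin 2) :
    exch 2 3 ψ ![a,b,c,d] = 2 * ψ ![a,b,d,c] - ψ ![a,b,c,d] := by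
  fin_cases c <;> fin_cases d <;>
    simp [exch, pauliX, pauliY, pauliZ, upd0, upd1, upd2, upd3] <;>
    ring_nf <;> simp [Complex.I_sq] <;> ring_nf

lemma pairs_eq : (Finset.univ.filter (fun p : Fin 4 × Fin 4 => p.1 < p.2)) =
    ({(0,1),(0,2),(0,3),(1,2),(1,3),(2,3)} : Finset (Fin 4 × Fin 4)) := by decide

lemma HSC_b (J : ℝ) (ψ : QState 4) (a b c d : Fin 2) :
    HSC J ψ ![a,b,c,d] =
      (J : ℂ) * (2 * Pop ψ ![a,b,c,d] - 6 * ψ ![a,b,c,d]) := by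
  simp only [HSC, pairs_eq, Pi.smul_apply, Finset.sum_apply, smul_eq_mul]
  rw [show ({(0,1),(0,2),(0,3),(1,2),(1,3),(2,3)} : Finset (Fin 4 × Fin 4)).sum
      (fun p => exch p.1 p.2 ψ ![a,b,c,d]) =
      exch 0 1 ψ ![a,b,c,d] + exch 0 2 ψ ![a,b,c,d] + exch 0 3 ψ ![a,b,c,d] +
      exch 1 2 ψ ![a,b,c,d] + exch 1 3 ψ ![a,b,c,d] + exch 2 3 ψ ![a,b,c,d] from by
    simp [Finset.sum_insert, Finset.mem_insert]; ring]
  rw [exch01, exch02, exch03, exch12, exch13, exch23]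
  simp only [Pop]
  simp only [Matrix.cons_val_zero, Matrix.cons_val_one, Matrix.head_cons,
    Matrix.cons_val_two, Matrix.tail_cons, Matrix.cons_val_three]
  ring

lemma Pop_cubic (ψ : QState 4) (a b c d : Fin 2) :
    Pop (Pop (Pop ψ)) ![a,b,c,d] + 12 * Pop ψ ![a,b,c,d] =
      8 * Pop (Pop ψ) ![a,b,c,d] := by
  fin_cases a <;> fin_cases b <;> fin_cases c <;> fin_cases d <;>
    (simp only [Pop, Matrix.cons_val_zero, Matrix.cons_val_one, Matrix.head_cons,
       Matrix.cons_val_two, Matrix.tail_cons, Matrix.cons_val_three]; ring)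

lemma sqrt2_sq : ((Real.sqrt 2 : ℝ) : ℂ) * ((Real.sqrt 2 : ℝ) : ℂ) = 2 := by
  norm_cast
  rw [Real.mul_self_sqrt (by norm_num)]

lemma sqrt3_sq : ((Real.sqrt 3 : ℝ) : ℂ) * ((Real.sqrt 3 : ℝ) : ℂ) = 3 := by
  norm_cast
  rw [Real.mul_self_sqrt (by norm_num)]

lemma sqrt2_ne : ((Real.sqrt 2 : ℝ) : ℂ) ≠ 0 := by
  intro h
  have := sqrt2_sq
  rw [h] at this
  norm_num at this

lemma sqrt3_ne : ((Real.sqrt 3 : ℝ) : ℂ) ≠ 0 := by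
  intro h
  have := sqrt3_sq
  rw [h] at this
  norm_num at this

lemma Pop_zeroBar (a b c d : Fin 2) : Pop zeroBar ![a,b,c,d] = 0 := by
  fin_cases a <;> fin_cases b <;> fin_cases c <;> fin_cases d <;>
    (simp only [Pop, zeroBar, singlet, Prod.mk.injEq, Matrix.cons_val_zero, Matrix.cons_val_one,
       Matrix.head_cons, Matrix.cons_val_two, Matrix.tail_cons, Matrix.cons_val_three];
     norm_num) <;> ring


lemma inv2_sq : (((Real.sqrt 2 : ℝ) : ℂ))⁻¹ * (((Real.sqrt 2 : ℝ) : ℂ))⁻¹ = 1/2 := by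
  rw [← mul_inv, sqrt2_sq]
  norm_num

lemma Pop_oneBar (a b c d : Fin 2) : Pop oneBar ![a,b,c,d] = 0 := by
  fin_cases a <;> fin_cases b <;> fin_cases c <;> fin_cases d <;>
    (simp only [Pop, oneBar, Tplus, T0, Tminus, Prod.mk.injEq, Matrix.cons_val_zero,
       Matrix.cons_val_one, Matrix.head_cons, Matrix.cons_val_two, Matrix.tail_cons,
       Matrix.cons_val_three];
     norm_num) <;>
    (simp only [inv2_sq]; ring)

lemma mB : (-1 : ℂ)/((Real.sqrt 2 : ℝ) : ℂ) * ((((Real.sqrt 2 : ℝ) : ℂ))⁻¹) = -(1/2) := by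
  rw [neg_div, neg_mul, one_div, inv2_sq]
lemma mC : ((((Real.sqrt 2 : ℝ) : ℂ))⁻¹) * ((-1 : ℂ)/((Real.sqrt 2 : ℝ) : ℂ)) = -(1/2) := by
  rw [mul_comm]; exact mB
lemma mD : (-1 : ℂ)/((Real.sqrt 2 : ℝ) : ℂ) * ((-1 : ℂ)/((Real.sqrt 2 : ℝ) : ℂ)) = 1/2 := by
  rw [neg_div, neg_mul, mul_neg, neg_neg, one_div, inv2_sq]

lemma hinv3 : ((Real.sqrt 3 : ℝ) : ℂ) * (((Real.sqrt 3 : ℝ) : ℂ))⁻¹ = 1 :=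
  mul_inv_cancel₀ sqrt3_ne

lemma inv2_sq' : ((((Real.sqrt 2 : ℝ) : ℂ))⁻¹) ^ 2 = 1/2 := by
  rw [sq]; exact inv2_sq

lemma Pop_unfold (φ : QState 4) (s : Fin 4 → Fin 2) :
    Pop φ s = φ ![s 1, s 0, s 2, s 3] + φ ![s 2, s 1, s 0, s 3] + φ ![s 3, s 1, s 2, s 0] +
      φ ![s 0, s 2, s 1, s 3] + φ ![s 0, s 3, s 2, s 1] + φ ![s 0, s 1, s 3, s 2] := rfl

lemma Pop_comp (φ χ : QState 4) (μ : ℂ) (h : ∀ s, φ s = μ * χ s) :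
    ∀ s, Pop φ s = μ * Pop χ s := by
  intro s
  rw [Pop_unfold φ s, Pop_unfold χ s, h, h, h, h, h, h]
  ring

lemma HSC_of_Pop_zero (J : ℝ) (ψ : QState 4) (h : ∀ a b c d : Fin 2, Pop ψ ![a,b,c,d] = 0) :
    HSC J ψ = (-6 * (J : ℂ)) • ψ := by
  funext s
  rw [← vec_eta s, HSC_b, h]
  simp only [Pi.smul_apply, smul_eq_mul]
  ring


/-- for `J > 0`, (i) `|0̄⟩` and `|1̄⟩` are eigenstates of `H_SC` with
eigenvalue `−6J`; (ii) every eigenvalue of `H_SC` lies in `{−6J, −2J, 6J}`, so `−6J`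
is the minimal eigenvalue and there is a gap of `4J` above the ground space; and
(iii) the `−6J` eigenspace is exactly the span of `|0̄⟩` and `|1̄⟩`. -/
theorem supercoherent_hamiltonian_spectrum (J : ℝ) (hJ : 0 < J) :
    (HSC J zeroBar = (-6 * (J : ℂ)) • zeroBar ∧ HSC J oneBar = (-6 * (J : ℂ)) • oneBar) ∧
    (∀ (c : ℂ) (ψ : QState 4), ψ ≠ 0 → HSC J ψ = c • ψ →
      c = -6 * (J : ℂ) ∨ c = -2 * (J : ℂ) ∨ c = 6 * (J : ℂ)) ∧
    (∀ ψ : QState 4, HSC J ψ = (-6 * (J : ℂ)) • ψ ↔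
      ψ ∈ Submodule.span ℂ ({zeroBar, oneBar} : Set (QState 4))) := by
  have hJc : (J : ℂ) ≠ 0 := by
    simp only [ne_eq, Complex.ofReal_eq_zero]
    exact hJ.ne'
  have h2J : (2 * (J : ℂ)) ≠ 0 := by
    intro h
    rcases mul_eq_zero.mp h with h | h
    · norm_num at h
    · exact hJc h
  refine ⟨⟨HSC_of_Pop_zero J zeroBar Pop_zeroBar, HSC_of_Pop_zero J oneBar Pop_oneBar⟩, ?_, ?_⟩
  · -- part (ii)
    intro c ψ hne heig
    obtain ⟨s₀, hs₀⟩ := Function.ne_iff.mp hne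
    simp only [Pi.zero_apply] at hs₀
    set μ : ℂ := (c + 6 * J) / (2 * J) with hμdef
    have hμpt : ∀ s, Pop ψ s = μ * ψ s := by
      intro s
      have h1 : HSC J ψ s = c * ψ s := by rw [heig]; simp
      rw [← vec_eta s] at h1 ⊢
      rw [HSC_b] at h1
      rw [hμdef, div_mul_eq_mul_div, eq_div_iff h2J]
      linear_combination h1
    have k2 : ∀ s, Pop (Pop ψ) s = μ * Pop ψ s := Pop_comp (Pop ψ) ψ μ hμpt
    have k3 : ∀ s, Pop (Pop (Pop ψ)) s = μ * Pop (Pop ψ) s :=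
      Pop_comp (Pop (Pop ψ)) (Pop ψ) μ k2
    have hcube := Pop_cubic ψ (s₀ 0) (s₀ 1) (s₀ 2) (s₀ 3)
    simp only [k3, k2, hμpt, vec_eta] at hcube
    have hpoly : μ * ((μ - 2) * (μ - 6)) = 0 := by
      have h3 : (μ * ((μ - 2) * (μ - 6))) * ψ s₀ = 0 := by linear_combination hcube
      rcases mul_eq_zero.mp h3 with h | h
      · exact h
      · exact absurd h hs₀
    have hc : c = 2 * (J : ℂ) * μ - 6 * J := by
      rw [hμdef, mul_div_assoc']
      rw [mul_comm (2 * (J : ℂ)) (c + 6 * J), mul_div_assoc, div_self h2J]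
      ring
    rcases mul_eq_zero.mp hpoly with h | h
    · left; rw [hc, h]; ring
    · rcases mul_eq_zero.mp h with h | h
      · right; left
        have hμ2 : μ = 2 := by linear_combination h
        rw [hc, hμ2]; ring
      · right; right
        have hμ6 : μ = 6 := by linear_combination h
        rw [hc, hμ6]; ring
  · -- part (iii)
    intro ψ
    constructor
    · intro h
      have hP : ∀ a b c d : Fin 2, Pop ψ ![a,b,c,d] = 0 := by
        intro a b c d
        have h1 : HSC J ψ ![a,b,c,d] = -6 * (J : ℂ) * ψ ![a,b,c,d] := by rw [h]; simp
        rw [HSC_b] at h1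
        have h2 : (J : ℂ) * (2 * Pop ψ ![a,b,c,d]) = 0 := by linear_combination h1
        rcases mul_eq_zero.mp h2 with h3 | h3
        · exact absurd h3 hJc
        · rcases mul_eq_zero.mp h3 with h4 | h4
          · norm_num at h4
          · exact h4
      have E : ∀ a b c d : Fin 2,
          ψ ![b, a, c, d] + ψ ![c, b, a, d] + ψ ![d, b, c, a] + ψ ![a, c, b, d] +
            ψ ![a, d, c, b] + ψ ![a, b, d, c] = 0 := by
        intro a b c d
        have := hP a b c d
        simp only [Pop, Matrix.cons_val_zero, Matrix.cons_val_one, Matrix.head_cons,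
          Matrix.cons_val_two, Matrix.tail_cons, Matrix.cons_val_three] at this
        exact this
      set x := ψ ![0,1,0,1] with hxdef
      set y := ψ ![0,1,1,0] with hydef
      rw [Submodule.mem_span_pair]
      refine ⟨x - y, -((Real.sqrt 3 : ℝ) : ℂ) * (x + y), ?_⟩
      have hX : ψ ![1,0,1,0] = x := by
        linear_combination (1/2 : ℂ) * (E 1 0 1 0) - (1/2 : ℂ) * (E 0 1 0 1)
      have hY : ψ ![1,0,0,1] = y := by
        linear_combination (1/2 : ℂ) * (E 1 0 0 1) - (1/2 : ℂ) * (E 0 1 1 0)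
      have hu : ψ ![0,0,1,1] = -(x + y) := by
        linear_combination (1/2 : ℂ) * (E 0 0 1 1) + (1/4 : ℂ) * (E 0 1 0 1) - (1/4 : ℂ) * (E 1 0 1 0)
          + (1/4 : ℂ) * (E 0 1 1 0) - (1/4 : ℂ) * (E 1 0 0 1)
      have hU : ψ ![1,1,0,0] = -(x + y) := by
        linear_combination (1/2 : ℂ) * (E 1 1 0 0) - (1/2 : ℂ) * (E 0 0 1 1) + hu
      have h0000 : ψ ![0,0,0,0] = 0 := by linear_combination (1/6 : ℂ) * (E 0 0 0 0)
      have h1111 : ψ ![1,1,1,1] = 0 := by linear_combination (1/6 : ℂ) * (E 1 1 1 1)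
      have h0001 : ψ ![0,0,0,1] = 0 := by
        linear_combination (5/12 : ℂ) * (E 0 0 0 1) - (1/12 : ℂ) * (E 0 0 1 0)
          - (1/12 : ℂ) * (E 0 1 0 0) - (1/12 : ℂ) * (E 1 0 0 0)
      have h0010 : ψ ![0,0,1,0] = 0 := by
        linear_combination (5/12 : ℂ) * (E 0 0 1 0) - (1/12 : ℂ) * (E 0 0 0 1)
          - (1/12 : ℂ) * (E 0 1 0 0) - (1/12 : ℂ) * (E 1 0 0 0)
      have h0100 : ψ ![0,1,0,0] = 0 := by
        linear_combination (5/12 : ℂ) * (E 0 1 0 0) - (1/12 : ℂ) * (E 0 0 0 1)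
          - (1/12 : ℂ) * (E 0 0 1 0) - (1/12 : ℂ) * (E 1 0 0 0)
      have h1000 : ψ ![1,0,0,0] = 0 := by
        linear_combination (5/12 : ℂ) * (E 1 0 0 0) - (1/12 : ℂ) * (E 0 0 0 1)
          - (1/12 : ℂ) * (E 0 0 1 0) - (1/12 : ℂ) * (E 0 1 0 0)
      have h1110 : ψ ![1,1,1,0] = 0 := by
        linear_combination (5/12 : ℂ) * (E 1 1 1 0) - (1/12 : ℂ) * (E 1 1 0 1)
          - (1/12 : ℂ) * (E 1 0 1 1) - (1/12 : ℂ) * (E 0 1 1 1)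
      have h1101 : ψ ![1,1,0,1] = 0 := by
        linear_combination (5/12 : ℂ) * (E 1 1 0 1) - (1/12 : ℂ) * (E 1 1 1 0)
          - (1/12 : ℂ) * (E 1 0 1 1) - (1/12 : ℂ) * (E 0 1 1 1)
      have h1011 : ψ ![1,0,1,1] = 0 := by
        linear_combination (5/12 : ℂ) * (E 1 0 1 1) - (1/12 : ℂ) * (E 1 1 1 0)
          - (1/12 : ℂ) * (E 1 1 0 1) - (1/12 : ℂ) * (E 0 1 1 1)
      have h0111 : ψ ![0,1,1,1] = 0 := by
        linear_combination (5/12 : ℂ) * (E 0 1 1 1) - (1/12 : ℂ) * (E 1 1 1 0)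
          - (1/12 : ℂ) * (E 1 1 0 1) - (1/12 : ℂ) * (E 1 0 1 1)
      funext s
      rw [← vec_eta s]
      simp only [Pi.add_apply, Pi.smul_apply, smul_eq_mul]
      generalize s 0 = a
      generalize s 1 = b
      generalize s 2 = c
      generalize s 3 = d
      fin_cases a <;> fin_cases b <;> fin_cases c <;> fin_cases d <;>
        (simp only [zeroBar, oneBar, singlet, Tplus, T0, Tminus, Prod.mk.injEq,
           Matrix.cons_val_zero, Matrix.cons_val_one, Matrix.head_cons, Matrix.cons_val_two,
           Matrix.tail_cons, Matrix.cons_val_three];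
         norm_num) <;>
        (try simp only [inv2_sq, inv2_sq', mB, mC, mD]) <;>
        first
          | linear_combination -h0000
          | linear_combination -h1111
          | linear_combination -h0001
          | linear_combination -h0010
          | linear_combination -h0100
          | linear_combination -h1000
          | linear_combination -h1110
          | linear_combination -h1101
          | linear_combination -h1011
          | linear_combination -h0111
          | linear_combination (-(x + y)) * hinv3 - hu
          | linear_combination (-(x + y)) * hinv3 - hU
          | linear_combination ((x + y)/2) * hinv3
          | linear_combination ((x + y)/2) * hinv3 - hX
          | linear_combination ((x + y)/2) * hinv3 - hY
          | linear_combination h0000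
          | linear_combination h1111
          | linear_combination (x + y) * hinv3 + hu
          | linear_combination (x + y) * hinv3 + hU
          | linear_combination (-(x + y)/2) * hinv3
          | linear_combination (-(x + y)/2) * hinv3 + hX
          | linear_combination (-(x + y)/2) * hinv3 + hY
    · intro hmem
      obtain ⟨a, b, hab⟩ := Submodule.mem_span_pair.mp hmem
      rw [← hab]
      apply HSC_of_Pop_zero
      intro p q r t
      have hlin : Pop (a • zeroBar + b • oneBar) ![p,q,r,t] =
          a * Pop zeroBar ![p,q,r,t] + b * Pop oneBar ![p,q,r,t] := by
        simp only [Pop, Pi.add_apply, Pi.smul_apply, smul_eq_mul]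
        ring
      rw [hlin, Pop_zeroBar, Pop_oneBar]
      ring
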